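/- arXiv:1706.03629 — 4 statements merged into one kernel-verified Lean document; each statement's English description precedes it below -/
import Mathlib

section
/- Let S be a commutative ring, A an n × m matrix over S, and b ∈ S^n. If for every prime ideal p of S the matrix A has the same rank over the residue field κ(p), then the set of primes p such that the linear system A x = b is solvable over κ(p) is Zariski closed in Spec S. -/
/-!
Over a field, `A x = b` is solvable iff the augmented matrix `[A | b]` has rank at most
`rank A`, and a matrix has rank at most `r` iff all its `(r + 1)`-minors vanish. Minors commute
with the ring maps `S → κ(p)`, so when `rank A` is a constant `r` over all residue fields, the
solvable locus is the common zero locus in `Spec S` of the `(r + 1)`-minors of `[A | b]`.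
-/

open Matrix Module Submodule

/-- The canonical map from `S` to the residue field of the prime `p`. -/
noncomputable def resMap {S : Type*} [CommRing S] (p : PrimeSpectrum S) :
    S →+* IsLocalRing.ResidueField (Localization.AtPrime p.asIdeal) :=
  (IsLocalRing.residue _).comp (algebraMap S (Localization.AtPrime p.asIdeal))

theorem Matrix.range_col_fromCols {R m n o : Type*} (M : Matrix m n R) (B : Matrix m o R) :
    Set.range (fromCols M B).col = Set.range M.col ∪ Set.range B.col := by
  have : (fromCols M B).col = Sum.elim M.col B.col := by ext (j | j) i <;> rfl
  rw [this, Set.Sum.elim_range]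

section Field

variable {K V : Type*} [Field K] [AddCommGroup V] [Module K V]

theorem exists_linearIndependent_comp_of_le_finrank_span {ι : Type*} [Finite ι] {v : ι → V}
    {k : ℕ} (hk : k ≤ finrank K (span K (Set.range v))) :
    ∃ g : Fin k → ι, LinearIndependent K (v ∘ g) := by
  obtain ⟨κ, a, ha, hspan, hli⟩ := exists_linearIndependent' K v
  have := Finite.of_injective a ha
  have := Fintype.ofFinite κ
  rw [← hspan, finrank_span_eq_card hli] at hk
  obtain ⟨e⟩ : Nonempty (Fin k ↪ κ) := Function.Embedding.nonempty_of_card_le (by simpa using hk)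
  exact ⟨a ∘ e, hli.comp e e.injective⟩

theorem mem_span_iff_finrank_span_insert_le {s : Set V} (hs : s.Finite) {b : V} :
    b ∈ span K s ↔ finrank K (span K (insert b s)) ≤ finrank K (span K s) := by
  refine ⟨fun hb => by rw [span_insert_eq_span hb], fun h => ?_⟩
  have : FiniteDimensional K (span K (insert b s)) :=
    FiniteDimensional.span_of_finite K (hs.insert b)
  rw [eq_of_le_of_finrank_le (span_mono (Set.subset_insert b s)) h]
  exact subset_span (Set.mem_insert b s)

namespace Matrix

variable {m n : Type*} [Fintype n]

theorem exists_det_submatrix_ne_zero_of_le_rank [Fintype m] {M : Matrix m n K} {k : ℕ} (hk : k ≤ M.rank) :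
    ∃ (f : Fin k → m) (g : Fin k → n), (M.submatrix f g).det ≠ 0 := by
  rw [rank_eq_finrank_span_cols] at hk
  obtain ⟨g, hg⟩ := exists_linearIndependent_comp_of_le_finrank_span hk
  have hN : k ≤ (M.submatrix id g).rank := by
    rw [← rank_transpose, LinearIndependent.rank_matrix (M := (M.submatrix id g)ᵀ) hg,
      Fintype.card_fin]
  rw [rank_eq_finrank_span_row] at hN
  obtain ⟨f, hf⟩ := exists_linearIndependent_comp_of_le_finrank_span hN
  exact ⟨f, g, ((isUnit_iff_isUnit_det _).mp (linearIndependent_rows_iff_isUnit.mp hf)).ne_zero⟩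

theorem rank_le_iff_forall_det_submatrix_eq_zero [Fintype m] (M : Matrix m n K) (r : ℕ) :
    M.rank ≤ r ↔ ∀ (f : Fin (r + 1) → m) (g : Fin (r + 1) → n), (M.submatrix f g).det = 0 := by
  constructor
  · intro h f g
    by_contra hdet
    have := rank_submatrix_le M f g
    rw [rank_of_det_ne_zero hdet, Fintype.card_fin] at this
    omega
  · intro h
    by_contra! hr
    obtain ⟨f, g, hfg⟩ := exists_det_submatrix_ne_zero_of_le_rank hr
    exact hfg (h f g)

theorem exists_mulVec_eq_iff_rank_fromCols_le (M : Matrix m n K) (b : m → K) :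
    (∃ x, M *ᵥ x = b) ↔ (fromCols M (replicateCol (Fin 1) b)).rank ≤ M.rank := by
  have hb : Set.range (replicateCol (Fin 1) b).col = {b} :=
    (Set.range_const : Set.range (fun _ : Fin 1 => b) = {b})
  rw [rank_eq_finrank_span_cols, rank_eq_finrank_span_cols, range_col_fromCols, hb,
    Set.union_singleton, ← mem_span_iff_finrank_span_insert_le (Set.finite_range _),
    ← range_mulVecLin]
  rfl

end Matrix

end Field

section ResidueField

variable {S : Type*} [CommRing S]

theorem resMap_eq_zero_iff (p : PrimeSpectrum S) (s : S) : resMap p s = 0 ↔ s ∈ p.asIdeal := by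
  rw [resMap, RingHom.comp_apply, IsLocalRing.residue_eq_zero_iff]
  exact IsLocalization.AtPrime.to_map_mem_maximal_iff _ p.asIdeal s

theorem setOf_rank_map_resMap_le_eq_zeroLocus {m n : Type*} [Fintype m] [Fintype n]
    (M : Matrix m n S) (r : ℕ) :
    {p : PrimeSpectrum S | (M.map (resMap p)).rank ≤ r} =
      PrimeSpectrum.zeroLocus
        {d | ∃ (f : Fin (r + 1) → m) (g : Fin (r + 1) → n), (M.submatrix f g).det = d} := by
  ext p
  have hminor (f : Fin (r + 1) → m) (g : Fin (r + 1) → n) :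
      ((M.map (resMap p)).submatrix f g).det = resMap p (M.submatrix f g).det := by
    rw [submatrix_map, RingHom.map_det]
    rfl
  rw [Set.mem_ofPred_eq, rank_le_iff_forall_det_submatrix_eq_zero, PrimeSpectrum.mem_zeroLocus]
  simp only [hminor, resMap_eq_zero_iff]
  exact ⟨fun h _ ⟨f, g, hd⟩ => hd ▸ h f g, fun h f g => h ⟨f, g, rfl⟩⟩

theorem isClosed_setOf_rank_map_resMap_le {m n : Type*} [Fintype m] [Fintype n]
    (M : Matrix m n S) (r : ℕ) : IsClosed {p : PrimeSpectrum S | (M.map (resMap p)).rank ≤ r} := by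
  rw [setOf_rank_map_resMap_le_eq_zeroLocus]
  exact PrimeSpectrum.isClosed_zeroLocus _

end ResidueField

/-- If an `n × m` matrix `A` over a commutative ring `S` has the same rank over the residue
field `κ(p)` of every prime `p`, then the locus of primes `p` where the linear system
`A x = b` is solvable over `κ(p)` is Zariski closed in `Spec S`. -/
theorem stmt0 {S : Type*} [CommRing S] {n m : ℕ}
    (A : Matrix (Fin n) (Fin m) S) (b : Fin n → S)
    (hrank : ∃ r : ℕ, ∀ p : PrimeSpectrum S, (A.map (resMap p)).rank = r) :
    IsClosed {p : PrimeSpectrum S |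
      ∃ x : Fin m → IsLocalRing.ResidueField (Localization.AtPrime p.asIdeal),
        (A.map (resMap p)).mulVec x = fun i => resMap p (b i)} := by
  obtain ⟨r, hr⟩ := hrank
  convert isClosed_setOf_rank_map_resMap_le (fromCols A (replicateCol (Fin 1) b)) r using 2
  ext p
  rw [exists_mulVec_eq_iff_rank_fromCols_le, hr p, fromCols_map]
  rfl
end

section
/- Let k be a field, R = k[x_1,...,x_n], and Δ : R → R ⊗_k R the algebra map with Δ(x_i) = x_i ⊗ x_i. If an ideal I ⊆ R satisfies Δ(I) ⊆ R ⊗_k I + I ⊗_k R, then I is generated by monomials and differences of two monomials (i.e., I is unital). -/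
/-!
Because `I` is a coideal, `Δ` descends to a linear map `δ : R/I → R/I ⊗ R/I`, and the image of
every monomial is group-like for it: `δ g = g ⊗ g`. The nonzero group-like elements are linearly
independent (the usual argument needs no counit). So if `f ∈ I` and no monomial `x^a` and no
difference `x^a - x^b` with `a ≠ b` in the support of `f` lies in `I`, the monomials of `f` have
distinct, nonzero, independent images in `R/I`, forcing `f = 0`. Otherwise subtracting a multiple
of such a generator shortens the support of `f`, and induction puts `f` in their span.
-/

open MvPolynomial TensorProduct

/-- An ideal of `k[x₁,…,xₙ]` is unital if it is generated by monomials and differences of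
two monomials. -/
def IsUnital {k : Type*} [Field k] {n : ℕ} (I : Ideal (MvPolynomial (Fin n) k)) : Prop :=
  ∃ B : Set (MvPolynomial (Fin n) k), I = Ideal.span B ∧
    ∀ f ∈ B, (∃ a : Fin n →₀ ℕ, f = monomial a 1) ∨
      (∃ a b : Fin n →₀ ℕ, f = monomial a 1 - monomial b 1)

theorem linearIndepOn_setOf_comul_eq_tmul_self {k V : Type*} [Field k] [AddCommGroup V]
    [Module k V] (δ : V →ₗ[k] V ⊗[k] V) :
    LinearIndepOn k id {g : V | g ≠ 0 ∧ δ g = g ⊗ₜ g} := by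
  classical
  rw [linearIndepOn_iff_linearIndepOn_finset]
  intro s hs
  induction s using Finset.cons_induction with
  | empty => simp
  | cons a s has ih =>
  simp only [Finset.coe_cons, Set.insert_subset_iff] at hs ⊢
  obtain ⟨⟨ha0, ha⟩, hs⟩ := hs
  specialize ih hs
  refine ih.id_insert fun ha_span => has ?_
  obtain ⟨c, -, rfl⟩ := Submodule.mem_span_finset.mp ha_span
  -- compare coefficients of `δ a = a ⊗ a` in the independent family `x ⊗ y`
  have hcc : ∀ x ∈ s, ∀ y ∈ s, c x * c y = if x = y then c x else 0 := by
    have hind := ih.tmul_of_isDomain ih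
    simp_rw [← Finset.coe_product, linearIndepOn_finset_iffₛ, id] at hind
    have key := calc
          ∑ x ∈ s, ∑ y ∈ s, (c x * c y) • x ⊗ₜ[k] y
      _ = δ (∑ x ∈ s, c x • x) := by
        rw [ha]; simp_rw [sum_tmul, tmul_sum, smul_tmul_smul]
      _ = ∑ x ∈ s, ∑ y ∈ s, (if x = y then c x else 0) • x ⊗ₜ[k] y := by
        simp +contextual [map_sum, (hs _).2]
    simp_rw [← Finset.sum_product'] at key
    exact fun x hx y hy => hind _ _ key (x, y) (Finset.mem_product.mpr ⟨hx, hy⟩)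
  obtain ⟨x, hx, hcx⟩ : ∃ x ∈ s, c x ≠ 0 := by
    by_contra! h
    exact ha0 (Finset.sum_eq_zero fun x hx => by simp [h x hx])
  have hcy : ∀ y ∈ s, y ≠ x → c y = 0 := fun y hy hyx => by
    simpa [hcx, hyx] using hcc y hy x hx
  have hcx1 : c x = 1 := by simpa [hcx] using hcc x hx x hx
  rw [Finset.sum_eq_single x (fun y hy hyx => by simp [hcy y hy hyx]) (by simp [hx]), hcx1,
    one_smul]
  exact hx

namespace MvPolynomial
variable {σ k : Type*}

theorem aeval_X_tmul_X_monomial [CommSemiring k] (a : σ →₀ ℕ) :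
    aeval (fun i => (X i : MvPolynomial σ k) ⊗ₜ[k] (X i : MvPolynomial σ k))
      (monomial a (1 : k)) = monomial a (1 : k) ⊗ₜ monomial a (1 : k) := by
  induction a using Finsupp.induction with
  | zero => simp [Algebra.TensorProduct.one_def]
  | single_add i e a _ _ ih =>
    have hmul : monomial (Finsupp.single i e + a) (1 : k) = X i ^ e * monomial a 1 := by
      rw [X_pow_eq_monomial, monomial_mul, mul_one]
    rw [hmul, map_mul, ih, map_pow, aeval_X, Algebra.TensorProduct.tmul_pow,
      Algebra.TensorProduct.tmul_mul_tmul]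

theorem card_support_sub_coeff_smul_lt [CommRing k] {f g : MvPolynomial σ k} {a : σ →₀ ℕ}
    (hg : g.support ⊆ f.support) (ha : a ∈ f.support) (hga : coeff a g = 1) :
    (f - coeff a f • g).support.card < f.support.card := by
  classical
  refine Finset.card_lt_card ((Finset.ssubset_iff_of_subset fun d hd => ?_).mpr
    ⟨a, ha, by simp [hga]⟩)
  by_contra hdf
  have hgd : coeff d g = 0 := notMem_support_iff.mp fun h => hdf (hg h)
  exact mem_support_iff.mp hd (by simp [notMem_support_iff.mp hdf, hgd])

variable [Field k] (I : Ideal (MvPolynomial σ k))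

def unitalGenerators : Set (MvPolynomial σ k) :=
  {f | f ∈ I ∧ ((∃ a, f = monomial a 1) ∨ ∃ a b, f = monomial a 1 - monomial b 1)}

theorem eq_zero_of_mem_of_linearIndepOn_support {f : MvPolynomial σ k} (hf : f ∈ I)
    (h : LinearIndepOn k (fun a => Ideal.Quotient.mkₐ k I (monomial a 1)) f.support) :
    f = 0 := by
  have hsum : ∑ a ∈ f.support, coeff a f • Ideal.Quotient.mkₐ k I (monomial a 1) = 0 := by
    calc _ = Ideal.Quotient.mkₐ k I f := by
          conv_rhs => rw [f.as_sum]
          simp only [map_sum, ← map_smul, smul_eq_mul, mul_one]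
      _ = 0 := by rw [Ideal.Quotient.mkₐ_eq_mk, Ideal.Quotient.eq_zero_iff_mem]; exact hf
  by_contra hf0
  obtain ⟨a, ha⟩ := support_nonempty.mpr hf0
  exact mem_support_iff.mp ha (linearIndepOn_finset_iff.mp h _ hsum a ha)

theorem mem_span_unitalGenerators_of_linearIndepOn
    (h : LinearIndepOn k id
      {g : MvPolynomial σ k ⧸ I |
         g ≠ 0 ∧ ∃ a, Ideal.Quotient.mkₐ k I (monomial a 1) = g})
    {f : MvPolynomial σ k} (hf : f ∈ I) : f ∈ Submodule.span k (unitalGenerators I) := by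
  classical
  induction hcard : f.support.card using Nat.strong_induction_on generalizing f with
  | _ m ih =>
  by_cases hreducible : ∃ a ∈ f.support, ∃ g ∈ unitalGenerators I,
      g.support ⊆ f.support ∧ coeff a g = 1
  · obtain ⟨a, ha, g, hg, hgf, hga⟩ := hreducible
    have hf' : f - coeff a f • g ∈ I :=
      I.sub_mem hf (by rw [smul_eq_C_mul]; exact I.mul_mem_left _ hg.1)
    have h' := ih _ (hcard ▸ card_support_sub_coeff_smul_lt hgf ha hga) hf' rfl
    simpa using add_mem h' (Submodule.smul_mem _ (coeff a f) (Submodule.subset_span hg))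
  · push Not at hreducible
    set v := fun a => Ideal.Quotient.mkₐ k I (monomial a (1 : k))
    have hmonomial_subset : ∀ a ∈ f.support, (monomial a (1 : k)).support ⊆ f.support :=
      fun a ha => support_monomial_subset.trans (Finset.singleton_subset_iff.mpr ha)
    have hv0 : ∀ a ∈ f.support, v a ≠ 0 := fun a ha h0 => by
      refine hreducible a ha _ ⟨?_, Or.inl ⟨a, rfl⟩⟩ (hmonomial_subset a ha) (by simp)
      exact Ideal.Quotient.eq_zero_iff_mem.mp h0
    have hinj : Set.InjOn v f.support := fun a ha b hb hab => by
      by_contra hne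
      refine hreducible a ha _ ⟨?_, Or.inr ⟨a, b, rfl⟩⟩ ?_
        (by simp [coeff_monomial, Ne.symm hne])
      · exact Ideal.Quotient.eq.mp hab
      · exact (support_sub _ _ _).trans
          (Finset.union_subset (hmonomial_subset a ha) (hmonomial_subset b hb))
    have hind : LinearIndepOn k v f.support := by
      refine (linearIndepOn_iff_image hinj).mpr (h.mono ?_)
      rintro _ ⟨a, ha, rfl⟩
      exact ⟨hv0 a ha, a, rfl⟩
    rw [eq_zero_of_mem_of_linearIndepOn_support I hf hind]
    exact zero_mem _

end MvPolynomial

/-- If an ideal `I ⊆ k[x₁,…,xₙ]` is a coideal for the comultiplication `Δ` with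
`Δ(xᵢ) = xᵢ ⊗ xᵢ`, i.e. `Δ(I) ⊆ k[x] ⊗ I + I ⊗ k[x]`, then `I` is unital (generated by
monomials and differences of two monomials). -/
theorem stmt7 {k : Type*} [Field k] {n : ℕ} (I : Ideal (MvPolynomial (Fin n) k))
    (Δ : MvPolynomial (Fin n) k →ₐ[k] MvPolynomial (Fin n) k ⊗[k] MvPolynomial (Fin n) k)
    (hΔ : Δ = aeval (fun i => (X i : MvPolynomial (Fin n) k) ⊗ₜ[k] (X i)))
    (hcoideal : ∀ f ∈ I, Δ f ∈
      I.map (Algebra.TensorProduct.includeLeft :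
          MvPolynomial (Fin n) k →ₐ[k] MvPolynomial (Fin n) k ⊗[k] MvPolynomial (Fin n) k) ⊔
      I.map (Algebra.TensorProduct.includeRight :
          MvPolynomial (Fin n) k →ₐ[k] MvPolynomial (Fin n) k ⊗[k] MvPolynomial (Fin n) k)) :
    IsUnital I := by
  have hπ : Function.Surjective (Ideal.Quotient.mkₐ k I) := Ideal.Quotient.mkₐ_surjective k I
  have hker : ∀ f ∈ I, Algebra.TensorProduct.map (Ideal.Quotient.mkₐ k I)
      (Ideal.Quotient.mkₐ k I) (Δ f) = 0 := fun f hf => by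
    rw [← RingHom.mem_ker, Algebra.TensorProduct.map_ker _ _ hπ hπ,
      ← RingHom.ker_coe_toRingHom, Ideal.Quotient.mkₐ_ker]
    exact hcoideal f hf
  set π := Ideal.Quotient.mkₐ k I
  let δ := Ideal.Quotient.liftₐ I ((Algebra.TensorProduct.map π π).comp Δ) hker
  have hgrouplike :
      {g | g ≠ 0 ∧ ∃ a, π (monomial a 1) = g} ⊆ {g | g ≠ 0 ∧ δ g = g ⊗ₜ g} := by
    rintro _ ⟨h0, a, rfl⟩
    refine ⟨h0, ?_⟩
    change Algebra.TensorProduct.map π π (Δ (monomial a 1)) = _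
    rw [hΔ, aeval_X_tmul_X_monomial, Algebra.TensorProduct.map_tmul]
  refine ⟨unitalGenerators I, le_antisymm (fun f hf => ?_) (Ideal.span_le.mpr fun f hf => hf.1),
    fun f hf => hf.2⟩
  exact Submodule.span_le_restrictScalars k _ _ <| mem_span_unitalGenerators_of_linearIndepOn I
    ((linearIndepOn_setOf_comul_eq_tmul_self δ.toLinearMap).mono hgrouplike) hf
end

section
/- Let S = k[a,b] and I = ⟨ax − 1, by − 1⟩ ⊆ S[x,y]. Then S[x,y]/I is flat over S, but the quotient S[x,y,z]/Ĩ by the homogenization Ĩ = ⟨ax − z, by − z⟩ is not flat over S. -/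
/-!
Inverting `a` and `b` by the relations `ax = 1`, `by = 1` presents `S[x,y]/I` as a localization of
`S`, which is flat. For the homogenized ideal, flatness would make `a, b` a regular sequence
on `S[x,y,z]/Ĩ`, as it is on `S`. But there `b y = z = a x`, while `y` is not a multiple of `a`:
setting `a = b = 0`, `x = z = 0` and `y = 1` respects the relations.
-/

open MvPolynomial RingTheory.Sequence

theorem RingTheory.Sequence.isWeaklyRegular_pair_iff {R : Type*} [CommRing R] (a b : R) :
    IsWeaklyRegular R [a, b] ↔ IsSMulRegular R a ∧ ∀ y : R, a ∣ b * y → a ∣ y := by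
  rw [isWeaklyRegular_cons_iff, isWeaklyRegular_singleton_iff]
  refine and_congr_right' ((isSMulRegular_quotient_iff_mem_of_smul_mem _ _).trans ?_)
  simp only [Submodule.mem_smul_pointwise_iff_exists, Submodule.mem_top, true_and, smul_eq_mul,
    Dvd.dvd, eq_comm]

namespace MvPolynomial

variable {σ R : Type*} [CommRing R]

theorem isWeaklyRegular_X_X [IsDomain R] {i j : σ} (hij : i ≠ j) :
    IsWeaklyRegular (MvPolynomial σ R) [(X i : MvPolynomial σ R), X j] := by
  rw [isWeaklyRegular_pair_iff]
  refine ⟨isRegular_X.left.isSMulRegular, fun y h => ?_⟩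
  exact (X_prime.dvd_or_dvd h).resolve_left (by rwa [X_dvd_X])

noncomputable def adjoinInvIdeal (r : σ → R) : Ideal (MvPolynomial σ R) :=
  Ideal.span (Set.range fun i => C (r i) * X i - 1)

section adjoinInv

variable (r : σ → R)

theorem algebraMap_mul_mk_X_eq_one (i : σ) :
    algebraMap R (MvPolynomial σ R ⧸ adjoinInvIdeal r) (r i) *
      Ideal.Quotient.mk (adjoinInvIdeal r) (X i) = 1 := by
  rw [← Ideal.Quotient.mk_algebraMap, algebraMap_eq, ← map_mul, ← map_one (Ideal.Quotient.mk _),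
    Ideal.Quotient.eq]
  exact Ideal.subset_span ⟨i, rfl⟩

instance {P : Type*} [CommRing P] [Algebra R P] :
    Subsingleton (MvPolynomial σ R ⧸ adjoinInvIdeal r →ₐ[R] P) := by
  refine ⟨fun f g => Ideal.Quotient.algHom_ext R (algHom_ext fun i => ?_)⟩
  have h (φ : MvPolynomial σ R ⧸ adjoinInvIdeal r →ₐ[R] P) :
      algebraMap R P (r i) * φ (Ideal.Quotient.mk _ (X i)) = 1 := by
    rw [← φ.commutes, ← map_mul, algebraMap_mul_mk_X_eq_one, map_one]
  exact left_inv_eq_right_inv (by rw [mul_comm]; exact h f) (h g)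

theorem isLocalization_quotient_adjoinInvIdeal :
    IsLocalization (Submonoid.closure (Set.range r)) (MvPolynomial σ R ⧸ adjoinInvIdeal r) := by
  set M := Submonoid.closure (Set.range r)
  have hunit (i : σ) : IsUnit (algebraMap R (Localization M) (r i)) :=
    IsLocalization.map_units (M := M) _ ⟨r i, Submonoid.subset_closure ⟨i, rfl⟩⟩
  let toLoc : MvPolynomial σ R ⧸ adjoinInvIdeal r →ₐ[R] Localization M :=
    Ideal.Quotient.liftₐ _ (aeval fun i => ↑(hunit i).unit⁻¹) fun p hp => by
      refine (Ideal.span_le (I := RingHom.ker _)).2 ?_ hp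
      rintro _ ⟨i, rfl⟩
      simp
  let ofLoc : Localization M →ₐ[R] MvPolynomial σ R ⧸ adjoinInvIdeal r :=
    IsLocalization.liftAlgHom (M := M) (f := Algebra.ofId _ _) fun y => by
      have : M ≤ (IsUnit.submonoid _).comap (algebraMap R (MvPolynomial σ R ⧸ adjoinInvIdeal r)) :=
        Submonoid.closure_le.2 <| Set.range_subset_iff.2 fun i =>
          IsUnit.of_mul_eq_one _ (algebraMap_mul_mk_X_eq_one r i)
      exact this y.2
  exact IsLocalization.isLocalization_of_algEquiv M <| AlgEquiv.ofAlgHom ofLoc toLoc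
    (Subsingleton.elim _ _) (Subsingleton.elim (h := IsLocalization.algHom_subsingleton M) _ _)

theorem adjoinInvIdeal_fin_two (a b : R) :
    adjoinInvIdeal ![a, b] = Ideal.span {C a * X 0 - 1, C b * X 1 - 1} := by
  rw [adjoinInvIdeal]
  congr 1
  ext p
  simp [Fin.exists_fin_two, eq_comm]

theorem flat_quotient_adjoinInvIdeal : Module.Flat R (MvPolynomial σ R ⧸ adjoinInvIdeal r) :=
  have := isLocalization_quotient_adjoinInvIdeal r
  IsLocalization.flat _ (Submonoid.closure (Set.range r))

end adjoinInv

theorem not_flat_quotient_span_C_mul_X_sub_X {K : Type*} [CommRing K] [Nontrivial K] {a b : R}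
    (hab : IsWeaklyRegular R [a, b]) (φ : R →+* K) (ha : φ a = 0) (hb : φ b = 0) :
    ¬ Module.Flat R
      (MvPolynomial (Fin 3) R ⧸ Ideal.span {C a * X 0 - X 2, C b * X 1 - X 2}) := by
  set J : Ideal (MvPolynomial (Fin 3) R) := Ideal.span {C a * X 0 - X 2, C b * X 1 - X 2}
  have hrel₁ : C a * X 0 - X 2 ∈ J := Ideal.subset_span (by simp)
  have hrel₂ : C b * X 1 - X 2 ∈ J := Ideal.subset_span (by simp)
  have hdvd : algebraMap R (MvPolynomial (Fin 3) R ⧸ J) a ∣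
      algebraMap R _ b * Ideal.Quotient.mk J (X 1) := by
    refine ⟨Ideal.Quotient.mk J (X 0), ?_⟩
    rw [← Ideal.Quotient.mk_algebraMap, ← Ideal.Quotient.mk_algebraMap, ← map_mul, ← map_mul,
      Ideal.Quotient.eq, algebraMap_eq]
    convert J.sub_mem hrel₂ hrel₁ using 1
    ring
  let ev : MvPolynomial (Fin 3) R ⧸ J →+* K :=
    Ideal.Quotient.lift J (eval₂Hom φ ![0, 1, 0]) fun p hp => by
      refine (Ideal.span_le (I := RingHom.ker _)).2 ?_ hp
      rintro _ (rfl | rfl) <;> simp [hb]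
  have hev (p : MvPolynomial (Fin 3) R) : ev (Ideal.Quotient.mk J p) = eval₂ φ ![0, 1, 0] p :=
    Ideal.Quotient.lift_mk _ _ _
  intro hflat
  have hreg := (isWeaklyRegular_pair_iff _ _).1 (by simpa using hab.of_flat (S := _ ⧸ J))
  obtain ⟨t, ht⟩ := hreg.2 _ hdvd
  simpa [hev, ← Ideal.Quotient.mk_algebraMap, ha] using congrArg ev ht

end MvPolynomial

/-- Let `S = k[a,b]` and `I = ⟨ax − 1, by − 1⟩ ⊆ S[x,y]`. Then `S[x,y]/I` is flat over `S`,
but the quotient `S[x,y,z]/Ĩ` by the homogenization `Ĩ = ⟨ax − z, by − z⟩` is not flat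
over `S`.  Here `a = X 0`, `b = X 1` in `S = k[a,b]`, and `x = X 0`, `y = X 1`, `z = X 2`
in the polynomial rings over `S`. -/
theorem stmt10 {k : Type*} [Field k] :
    Module.Flat (MvPolynomial (Fin 2) k)
      (MvPolynomial (Fin 2) (MvPolynomial (Fin 2) k) ⧸
        (Ideal.span {C (X 0 : MvPolynomial (Fin 2) k) * X 0 - 1,
                     C (X 1 : MvPolynomial (Fin 2) k) * X 1 - 1} :
          Ideal (MvPolynomial (Fin 2) (MvPolynomial (Fin 2) k)))) ∧
    ¬ Module.Flat (MvPolynomial (Fin 2) k)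
      (MvPolynomial (Fin 3) (MvPolynomial (Fin 2) k) ⧸
        (Ideal.span {C (X 0 : MvPolynomial (Fin 2) k) * X 0 - X 2,
                     C (X 1 : MvPolynomial (Fin 2) k) * X 1 - X 2} :
          Ideal (MvPolynomial (Fin 3) (MvPolynomial (Fin 2) k)))) := by
  refine ⟨?_, not_flat_quotient_span_C_mul_X_sub_X (isWeaklyRegular_X_X (by decide))
    constantCoeff (constantCoeff_X _ _) (constantCoeff_X _ _)⟩
  rw [← adjoinInvIdeal_fin_two]
  exact flat_quotient_adjoinInvIdeal _
end

section
/- Let k be a field and let I ⊆ k[x_1,...,x_n] be an ideal generated by binomials x^a − λ x^b (with λ ∈ k possibly zero). Then the reduced Gröbner basis of I with respect to any term order consists of binomials. -/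
/-! No nonzero element of `I` is supported on standard monomials (those divisible by no leading
monomial of `G`). Fix a standard monomial `x^{p₀}`. Because `I` is spanned over `k` by the
binomials it contains, sending `x^p` to the scalar `c` with `x^p ≡ c x^{p₀} (mod I)` (unique, and
taken to be `0` when no such `c` exists) defines a linear functional vanishing on `I`. The tail `f`
of `g = x^a - f ∈ G` is supported on standard monomials, and the functional applied to `g` gives
`x^a ≡ c x^{p₀}` with `c` the coefficient of `x^{p₀}` in `f`; so `f - c x^{p₀}` is a
standard-supported element of `I`, hence zero. -/

open MvPolynomial

variable {k : Type*} [Field k] {n : ℕ}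

/-- `a` is the leading monomial (exponent) of `f` with respect to the strict order `r`. -/
def IsLeadOf (r : (Fin n →₀ ℕ) → (Fin n →₀ ℕ) → Prop) (a : Fin n →₀ ℕ)
    (f : MvPolynomial (Fin n) k) : Prop :=
  a ∈ f.support ∧ ∀ b ∈ f.support, b ≠ a → r b a

/-- `G` is a reduced Gröbner basis of `I` with respect to the term order `r`:  its elements
are nonzero members of `I`, their leading monomials divide the leading monomial of every
nonzero element of `I`, they are monic, and no monomial occurring in an element of `G` is
divisible by the leading monomial of a different element of `G`. -/
def IsReducedGroebnerBasis (r : (Fin n →₀ ℕ) → (Fin n →₀ ℕ) → Prop)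
    (I : Ideal (MvPolynomial (Fin n) k)) (G : Finset (MvPolynomial (Fin n) k)) : Prop :=
  (∀ g ∈ G, g ∈ I ∧ g ≠ 0) ∧
  (∀ f ∈ I, f ≠ 0 → ∃ g ∈ G, ∃ a b : Fin n →₀ ℕ,
      IsLeadOf r a f ∧ IsLeadOf r b g ∧ ∃ c, a = b + c) ∧
  (∀ g ∈ G, ∀ a : Fin n →₀ ℕ, IsLeadOf r a g → MvPolynomial.coeff a g = 1) ∧
  (∀ g ∈ G, ∀ g' ∈ G, g ≠ g' → ∀ a ∈ g.support, ∀ b : Fin n →₀ ℕ,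
      IsLeadOf r b g' → ¬ ∃ c, a = b + c)

variable {σ : Type*}

def IsBinomial (f : MvPolynomial σ k) : Prop :=
  ∃ (a b : σ →₀ ℕ) (l : k), f = monomial a 1 - C l * monomial b 1

theorem IsBinomial.monomial_one_mul {f : MvPolynomial σ k} (hf : IsBinomial f) (u : σ →₀ ℕ) :
    IsBinomial (monomial u 1 * f) := by
  obtain ⟨a, b, l, rfl⟩ := hf
  exact ⟨u + a, u + b, l, by rw [mul_sub, monomial_mul, mul_left_comm, monomial_mul, one_mul]⟩

theorem mul_mem_span_isBinomial {I : Ideal (MvPolynomial σ k)} (p : MvPolynomial σ k)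
    {f : MvPolynomial σ k} (hf : f ∈ Submodule.span k {β | β ∈ I ∧ IsBinomial β}) :
    p * f ∈ Submodule.span k {β | β ∈ I ∧ IsBinomial β} := by
  induction p using MvPolynomial.induction_on' with
  | monomial u c =>
    have hle : Submodule.span k {β | β ∈ I ∧ IsBinomial β} ≤
        (Submodule.span k {β | β ∈ I ∧ IsBinomial β}).comap
          (LinearMap.mulLeft k (monomial u c)) :=
      Submodule.span_le.mpr fun β ⟨hβI, hβ⟩ => by
        have hβ' : monomial u c * β = c • (monomial u 1 * β) := by
          rw [← smul_mul_assoc, smul_monomial, smul_eq_mul, mul_one]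
        simp only [SetLike.mem_coe, Submodule.mem_comap, LinearMap.mulLeft_apply, hβ']
        exact Submodule.smul_mem _ c
          (Submodule.subset_span ⟨I.mul_mem_left _ hβI, hβ.monomial_one_mul u⟩)
    exact hle hf
  | add p q hp hq => rw [add_mul]; exact Submodule.add_mem _ hp hq

theorem restrictScalars_span_le_span_isBinomial {B : Set (MvPolynomial σ k)}
    (hB : ∀ f ∈ B, IsBinomial f) :
    (Ideal.span B).restrictScalars k ≤
      Submodule.span k {β | β ∈ Ideal.span B ∧ IsBinomial β} := by
  intro f hf
  rw [Submodule.restrictScalars_mem] at hf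
  induction hf using Submodule.span_induction with
  | mem x hx => exact Submodule.subset_span ⟨Ideal.subset_span hx, hB x hx⟩
  | zero => exact Submodule.zero_mem _
  | add x y _ _ hx hy => exact Submodule.add_mem _ hx hy
  | smul p x _ hx => exact mul_mem_span_isBinomial p hx

section MonomialRatio

variable {I : Ideal (MvPolynomial σ k)} {p₀ : σ →₀ ℕ}

variable (I p₀) in
open Classical in
noncomputable def monomialRatio (p : σ →₀ ℕ) : k :=
  if h : ∃ c, monomial p 1 - monomial p₀ c ∈ I then h.choose else 0

theorem monomialRatio_spec {p : σ →₀ ℕ} (h : ∃ c, monomial p 1 - monomial p₀ c ∈ I) :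
    monomial p 1 - monomial p₀ (monomialRatio I p₀ p) ∈ I := by
  rw [monomialRatio, dif_pos h]
  exact h.choose_spec

theorem monomialRatio_eq_zero {p : σ →₀ ℕ} (h : ¬∃ c, monomial p 1 - monomial p₀ c ∈ I) :
    monomialRatio I p₀ p = 0 :=
  dif_neg h

theorem monomialRatio_eq_of_mem (hp₀ : ∀ c, monomial p₀ c ∈ I → c = 0) {p : σ →₀ ℕ} {c : k}
    (h : monomial p 1 - monomial p₀ c ∈ I) : monomialRatio I p₀ p = c := by
  have hdiff := I.sub_mem h (monomialRatio_spec ⟨c, h⟩)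
  rw [sub_sub_sub_cancel_left, ← map_sub] at hdiff
  exact sub_eq_zero.mp (hp₀ _ hdiff)

theorem monomialRatio_self (hp₀ : ∀ c, monomial p₀ c ∈ I → c = 0) :
    monomialRatio I p₀ p₀ = 1 :=
  monomialRatio_eq_of_mem hp₀ (by rw [sub_self]; exact I.zero_mem)

theorem monomialRatio_eq_mul (hp₀ : ∀ c, monomial p₀ c ∈ I → c = 0) {p q : σ →₀ ℕ} {l : k}
    (h : monomial p 1 - C l * monomial q 1 ∈ I) :
    monomialRatio I p₀ p = l * monomialRatio I p₀ q := by
  by_cases hq : ∃ c, monomial q 1 - monomial p₀ c ∈ I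
  · refine monomialRatio_eq_of_mem hp₀ ?_
    convert I.add_mem h (I.mul_mem_left (C l) (monomialRatio_spec hq)) using 1
    rw [← C_mul_monomial]
    ring
  rw [monomialRatio_eq_zero hq, mul_zero]
  by_cases hl : l = 0
  · exact monomialRatio_eq_of_mem hp₀ (by simpa [hl] using h)
  by_contra hp
  have hpex : ∃ c, monomial p 1 - monomial p₀ c ∈ I := by
    by_contra hn
    exact hp (monomialRatio_eq_zero hn)
  refine hq ⟨l⁻¹ * monomialRatio I p₀ p, ?_⟩
  convert I.mul_mem_left (C l⁻¹) (I.sub_mem (monomialRatio_spec hpex) h) using 1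
  rw [sub_sub_sub_cancel_left, mul_sub, ← mul_assoc, ← map_mul, inv_mul_cancel₀ hl, C_1,
    one_mul, C_mul_monomial]

variable (I p₀) in
noncomputable def ratioFunctional : MvPolynomial σ k →ₗ[k] k :=
  (basisMonomials σ k).constr k (monomialRatio I p₀)

theorem ratioFunctional_monomial (p : σ →₀ ℕ) (c : k) :
    ratioFunctional I p₀ (monomial p c) = c * monomialRatio I p₀ p := by
  have hp : monomial p c = c • basisMonomials σ k p := by
    rw [coe_basisMonomials, smul_monomial, smul_eq_mul, mul_one]
  rw [hp, map_smul, ratioFunctional, Module.Basis.constr_basis, smul_eq_mul]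

theorem ratioFunctional_apply (f : MvPolynomial σ k) :
    ratioFunctional I p₀ f = ∑ m ∈ f.support, coeff m f * monomialRatio I p₀ m := by
  conv_lhs => rw [f.as_sum]
  simp only [map_sum, ratioFunctional_monomial]

theorem ratioFunctional_eq_zero_of_mem
    (hI : I.restrictScalars k ≤ Submodule.span k {β | β ∈ I ∧ IsBinomial β})
    (hp₀ : ∀ c, monomial p₀ c ∈ I → c = 0) {f : MvPolynomial σ k} (hf : f ∈ I) :
    ratioFunctional I p₀ f = 0 := by
  have hle : Submodule.span k {β | β ∈ I ∧ IsBinomial β} ≤ LinearMap.ker (ratioFunctional I p₀) :=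
    Submodule.span_le.mpr fun β ⟨hβI, a, b, l, hβ⟩ => by
      subst hβ
      rw [SetLike.mem_coe, LinearMap.mem_ker, map_sub, C_mul_monomial, mul_one,
        ratioFunctional_monomial, ratioFunctional_monomial, one_mul,
        monomialRatio_eq_mul hp₀ hβI, sub_self]
  exact hle (hI hf)

end MonomialRatio

section SupportedOn

variable {S : Set (σ →₀ ℕ)}

theorem coe_support_monomial_subset {p : σ →₀ ℕ} (hp : p ∈ S) (c : k) :
    ↑(monomial p c).support ⊆ S :=
  (Finset.coe_subset.mpr support_monomial_subset).trans (by simpa)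

theorem coe_support_sub_subset {f g : MvPolynomial σ k} (hf : ↑f.support ⊆ S)
    (hg : ↑g.support ⊆ S) : ↑(f - g).support ⊆ S := by
  classical
  refine (Finset.coe_subset.mpr (support_sub σ f g)).trans ?_
  rw [Finset.coe_union]
  exact Set.union_subset hf hg

theorem exists_eq_monomial_of_monomial_sub_mem {I : Ideal (MvPolynomial σ k)}
    (hI : I.restrictScalars k ≤ Submodule.span k {β | β ∈ I ∧ IsBinomial β})
    (hS : ∀ f ∈ I, ↑f.support ⊆ S → f = 0)
    {a : σ →₀ ℕ} {f : MvPolynomial σ k} (hfS : ↑f.support ⊆ S) (hf : monomial a 1 - f ∈ I) :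
    ∃ b c, f = monomial b c := by
  classical
  rcases eq_or_ne f 0 with rfl | hf0
  · exact ⟨0, 0, by simp⟩
  obtain ⟨p₀, hp₀f⟩ := Finset.nonempty_of_ne_empty (support_eq_empty.not.mpr hf0)
  have hp₀S : p₀ ∈ S := hfS hp₀f
  have hp₀ : ∀ c, monomial p₀ c ∈ I → c = 0 := fun c hc =>
    monomial_eq_zero.mp (hS _ hc (coe_support_monomial_subset hp₀S c))
  have hratio : ∀ m ∈ f.support, m ≠ p₀ → monomialRatio I p₀ m = 0 := by
    intro m hm hne
    refine monomialRatio_eq_zero fun ⟨c, hc⟩ => ?_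
    have := congrArg (coeff m) (hS _ hc (coe_support_sub_subset
      (coe_support_monomial_subset (hfS hm) 1) (coe_support_monomial_subset hp₀S c)))
    simp [coeff_monomial, Ne.symm hne] at this
  have hφ := ratioFunctional_eq_zero_of_mem hI hp₀ hf
  rw [map_sub, ratioFunctional_monomial, one_mul, ratioFunctional_apply,
    Finset.sum_eq_single p₀ (fun m hm hne => by rw [hratio m hm hne, mul_zero])
      (fun h => absurd hp₀f h), monomialRatio_self hp₀, mul_one, sub_eq_zero] at hφ
  have ha : monomial a 1 - monomial p₀ (coeff p₀ f) ∈ I := by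
    rw [← hφ]
    refine monomialRatio_spec (not_not.mp fun hn => mem_support_iff.mp hp₀f ?_)
    rw [← hφ, monomialRatio_eq_zero hn]
  refine ⟨p₀, coeff p₀ f, (sub_eq_zero.mp (hS _ ?_ ?_)).symm⟩
  · simpa using I.sub_mem hf ha
  · exact coe_support_sub_subset (coe_support_monomial_subset hp₀S _) hfS

end SupportedOn

section Groebner

variable {r : (Fin n →₀ ℕ) → (Fin n →₀ ℕ) → Prop}

theorem IsLeadOf.unique [IsStrictOrder (Fin n →₀ ℕ) r] {a b : Fin n →₀ ℕ}
    {f : MvPolynomial (Fin n) k} (ha : IsLeadOf r a f) (hb : IsLeadOf r b f) : a = b := by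
  by_contra hne
  exact asymm (ha.2 b hb.1 (Ne.symm hne)) (hb.2 a ha.1 hne)

theorem IsLeadOf.not_exists_add_eq [IsStrictOrder (Fin n →₀ ℕ) r]
    (hadd : ∀ a b c : Fin n →₀ ℕ, r a b → r (a + c) (b + c))
    (hzero : ∀ a : Fin n →₀ ℕ, a ≠ 0 → r 0 a) {a m : Fin n →₀ ℕ}
    {f : MvPolynomial (Fin n) k} (ha : IsLeadOf r a f) (hm : m ∈ f.support) (hma : m ≠ a) :
    ¬ ∃ c, m = a + c := by
  rintro ⟨c, rfl⟩
  have hc : c ≠ 0 := by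
    rintro rfl
    exact hma (add_zero a)
  have hlt := hadd 0 c a (hzero c hc)
  rw [zero_add, add_comm] at hlt
  exact asymm hlt (ha.2 _ hm hma)

variable (r) in
def IsStandardMonomial (G : Finset (MvPolynomial (Fin n) k)) (m : Fin n →₀ ℕ) : Prop :=
  ∀ g ∈ G, ∀ b, IsLeadOf r b g → ¬ ∃ c, m = b + c

namespace IsReducedGroebnerBasis

variable {I : Ideal (MvPolynomial (Fin n) k)} {G : Finset (MvPolynomial (Fin n) k)}

theorem eq_zero_of_support_subset (hG : IsReducedGroebnerBasis r I G)
    {f : MvPolynomial (Fin n) k} (hf : f ∈ I)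
    (hfS : ↑f.support ⊆ {m | IsStandardMonomial r G m}) : f = 0 := by
  by_contra hf0
  obtain ⟨g, hg, a, b, ha, hb, hdvd⟩ := hG.2.1 f hf hf0
  exact hfS ha.1 g hg b hb hdvd

theorem support_monomial_sub_subset [IsStrictOrder (Fin n →₀ ℕ) r]
    (hadd : ∀ a b c : Fin n →₀ ℕ, r a b → r (a + c) (b + c))
    (hzero : ∀ a : Fin n →₀ ℕ, a ≠ 0 → r 0 a) (hG : IsReducedGroebnerBasis r I G)
    {g : MvPolynomial (Fin n) k} (hg : g ∈ G) {a : Fin n →₀ ℕ} (ha : IsLeadOf r a g) :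
    ↑(monomial a 1 - g).support ⊆ {m | IsStandardMonomial r G m} := by
  classical
  intro m hm
  rw [Finset.mem_coe, mem_support_iff, coeff_sub, coeff_monomial] at hm
  have hma : m ≠ a := by
    rintro rfl
    simp [hG.2.2.1 g hg m ha] at hm
  have hmg : m ∈ g.support := by
    rw [mem_support_iff]
    simpa [Ne.symm hma] using hm
  intro g' hg' b hb
  by_cases hgg : g' = g
  · subst hgg
    rw [hb.unique ha]
    exact ha.not_exists_add_eq hadd hzero hmg hma
  · exact hG.2.2.2 g hg g' hg' (Ne.symm hgg) m hmg b hb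

end IsReducedGroebnerBasis

end Groebner

/-- If an ideal `I ⊆ k[x₁,…,xₙ]` is generated by binomials `x^a − λ x^b` then any reduced
Gröbner basis of `I` with respect to any term order consists of binomials. -/
theorem stmt13 (r : (Fin n →₀ ℕ) → (Fin n →₀ ℕ) → Prop)
    [IsStrictTotalOrder (Fin n →₀ ℕ) r]
    (hadd : ∀ a b c : Fin n →₀ ℕ, r a b → r (a + c) (b + c))
    (hzero : ∀ a : Fin n →₀ ℕ, a ≠ 0 → r 0 a)
    (I : Ideal (MvPolynomial (Fin n) k))
    (hbin : ∃ B : Set (MvPolynomial (Fin n) k), I = Ideal.span B ∧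
      ∀ f ∈ B, ∃ (a b : Fin n →₀ ℕ) (l : k), f = monomial a 1 - C l * monomial b 1)
    (G : Finset (MvPolynomial (Fin n) k)) (hG : IsReducedGroebnerBasis r I G) :
    ∀ g ∈ G, ∃ (a b : Fin n →₀ ℕ) (l : k), g = monomial a 1 - C l * monomial b 1 := by
  obtain ⟨B, rfl, hB⟩ := hbin
  intro g hg
  obtain ⟨hgI, hg0⟩ := hG.1 g hg
  obtain ⟨-, -, a, -, ha, -⟩ := hG.2.1 g hgI hg0
  obtain ⟨b, l, htail⟩ := exists_eq_monomial_of_monomial_sub_mem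
    (restrictScalars_span_le_span_isBinomial hB) (fun f hf => hG.eq_zero_of_support_subset hf)
    (hG.support_monomial_sub_subset hadd hzero hg ha) (by rwa [sub_sub_cancel])
  exact ⟨a, b, l, by rw [C_mul_monomial, mul_one, ← htail, sub_sub_cancel]⟩
end
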